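/- arXiv:2010.02476 — 2 statements merged into one kernel-verified Lean document; each statement's English description precedes it below -/
import Mathlib

section
/- For every real p ≥ 1 and all real numbers a, b, one has | |a|^p − |b|^p | ≤ p 2^p ( |a − b| |b|^{p−1} + |a − b|^p ). -/
open MeasureTheory ProbabilityTheory Filter Set Topology

noncomputable section

variable {Ω : Type*} [MeasurableSpace Ω]

/-- A real-indexed process is (mean-zero) Gaussian on the index set `T`: every finite
linear combination of its values has a centred Gaussian distribution. -/
def IsGaussianOn (P : Measure Ω) (W : Ω → ℝ → ℝ) (T : Set ℝ) : Prop :=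
  ∀ (n : ℕ) (t : Fin n → ℝ), (∀ i, t i ∈ T) → ∀ c : Fin n → ℝ,
    ∃ v : NNReal, P.map (fun ω => ∑ i, c i * W ω (t i)) = gaussianReal 0 v

/-- A standard Wiener process on the index set `T ⊆ [0,∞)`. -/
structure IsWienerProcessOn (P : Measure Ω) (W : Ω → ℝ → ℝ) (T : Set ℝ) : Prop where
  meas : ∀ t ∈ T, Measurable fun ω => W ω t
  gauss : IsGaussianOn P W T
  cont : ∀ᵐ ω ∂P, ContinuousOn (W ω) T
  zero : ∀ᵐ ω ∂P, W ω 0 = 0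
  cov : ∀ s ∈ T, ∀ t ∈ T, ∫ ω, W ω s * W ω t ∂P = min s t

/-- A Brownian bridge on `[0,1]`. -/
structure IsBrownianBridge (P : Measure Ω) (B : Ω → ℝ → ℝ) : Prop where
  meas : ∀ t ∈ Icc (0:ℝ) 1, Measurable fun ω => B ω t
  gauss : IsGaussianOn P B (Icc 0 1)
  cont : ∀ᵐ ω ∂P, ContinuousOn (B ω) (Icc 0 1)
  cov : ∀ s ∈ Icc (0:ℝ) 1, ∀ t ∈ Icc (0:ℝ) 1,
    ∫ ω, B ω s * B ω t ∂P = min s t - s * t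

/-- `ξ_N = O_P(1)`: bounded in probability. -/
def IsBddInProb (P : Measure Ω) (ξ : ℕ → Ω → ℝ) : Prop :=
  ∀ ε : ℝ, 0 < ε → ∃ M : ℝ, ∀ N, P {ω | M < |ξ N ω|} ≤ ENNReal.ofReal ε

/-- `ξ_N = O_P(a_N)`. -/
def IsOP (P : Measure Ω) (ξ : ℕ → Ω → ℝ) (a : ℕ → ℝ) : Prop :=
  IsBddInProb P (fun N ω => ξ N ω / a N)

/-- Assumption 1: strong approximation of the partial sums of the errors by two
independent Wiener processes, with rate exponent `ζ < 1/2` and scale `σ > 0`. -/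
structure Assumption1 (P : Measure Ω) (eps : ℕ → Ω → ℝ)
    (σ ζ : ℝ) (W1 W2 : ℕ → Ω → ℝ → ℝ) : Prop where
  hσ : 0 < σ
  hζ : ζ < 1/2
  wiener1 : ∀ N : ℕ, IsWienerProcessOn P (W1 N) (Icc 0 ((N:ℝ)/2))
  wiener2 : ∀ N : ℕ, IsWienerProcessOn P (W2 N) (Icc 0 ((N:ℝ)/2))
  indep : ∀ N : ℕ, IndepFun (W1 N) (W2 N) P
  approx1 : IsBddInProb P (fun N ω =>
    ⨆ k : {k : ℕ // 1 ≤ k ∧ (k:ℝ) ≤ (N:ℝ)/2},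
      ((k:ℕ):ℝ) ^ (-ζ) *
        |(∑ i ∈ Finset.Icc 1 (k:ℕ), eps i ω) - σ * W1 N ω ((k:ℕ):ℝ)|)
  approx2 : IsBddInProb P (fun N ω =>
    ⨆ k : {k : ℕ // (N:ℝ)/2 < (k:ℝ) ∧ (k:ℕ) < N},
      ((N:ℝ) - ((k:ℕ):ℝ)) ^ (-ζ) *
        |(∑ i ∈ Finset.Icc ((k:ℕ)+1) N, eps i ω) - σ * W2 N ω ((N:ℝ) - ((k:ℕ):ℝ))|)

/-- The normalized CUSUM process `Z_N(t) = N^{-1/2} (Σ_{i≤⌊(N+1)t⌋} X_i − (⌊(N+1)t⌋/N) Σ_{i≤N} X_i)`. -/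
def cusum (X : ℕ → Ω → ℝ) (N : ℕ) (ω : Ω) (t : ℝ) : ℝ :=
  (Real.sqrt N)⁻¹ * ((∑ i ∈ Finset.Icc 1 ⌊((N:ℝ) + 1) * t⌋₊, X i ω)
    - (⌊((N:ℝ) + 1) * t⌋₊ : ℝ) / (N:ℝ) * ∑ i ∈ Finset.Icc 1 N, X i ω)

/-- Convergence in distribution of real random variables to the law `μ`. -/
def TendstoInDist (P : Measure Ω) (ξ : ℕ → Ω → ℝ) (μ : Measure ℝ) : Prop :=
  ∀ f : BoundedContinuousFunction ℝ ℝ,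
    Tendsto (fun N => ∫ ω, f (ξ N ω) ∂P) atTop (𝓝 (∫ x, f x ∂μ))

/-- The standard normal density. -/
def stdNormalDensity (x : ℝ) : ℝ := (Real.sqrt (2 * Real.pi))⁻¹ * Real.exp (-x^2 / 2)

/-- `b(p) = ∫ |x|^p φ(x) dx`. -/
def bConst (p : ℝ) : ℝ := ∫ x : ℝ, |x| ^ p * stdNormalDensity x

/-- The constant `a(p)` from the paper. -/
def aConst (p : ℝ) : ℝ :=
  ∫ u : ℝ, ∫ y : ℝ, ∫ x : ℝ, |x * y| ^ p *
    ((2 * Real.pi * Real.sqrt (1 - Real.exp (-2 * |u|)))⁻¹ *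
        Real.exp (-(x^2 + y^2 - 2 * Real.exp (-|u|) * |x * y|) /
          (2 * (1 - Real.exp (-2 * |u|))))
      - stdNormalDensity x * stdNormalDensity y)

/-!
Bernoulli's inequality gives the tangent-line bound `x ^ p - y ^ p ≤ p x ^ (p - 1) (x - y)`
for `0 ≤ y ≤ x`, hence `||a| ^ p - |b| ^ p| ≤ p max(|a|, |b|) ^ (p - 1) |a - b|`. As
`max(|a|, |b|) ≤ |b| + |a - b|` and `(s + t) ^ q ≤ 2 ^ q (s ^ q + t ^ q)` for `q ≥ 0`, this is
at most `p 2 ^ (p - 1) (|a - b| |b| ^ (p - 1) + |a - b| ^ p)`.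
-/

namespace Real

lemma rpow_sub_rpow_le_mul_rpow_mul_sub {p x y : ℝ} (hp : 1 ≤ p) (hy : 0 ≤ y)
    (hyx : y ≤ x) :
    x ^ p - y ^ p ≤ p * x ^ (p - 1) * (x - y) := by
  rcases (hy.trans hyx).eq_or_lt with rfl | hx
  · obtain rfl : y = 0 := le_antisymm hyx hy
    simp
  have hxp : x ^ p = x ^ (p - 1) * x := by rw [← rpow_add_one hx.ne', sub_add_cancel]
  have bernoulli := one_add_mul_self_le_rpow_one_add (s := y / x - 1)
    (by linarith [div_nonneg hy hx.le]) hp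
  rw [add_sub_cancel, div_rpow hy hx.le, le_div_iff₀ (by positivity), hxp] at bernoulli
  have expand : (1 + p * (y / x - 1)) * (x ^ (p - 1) * x) =
      x ^ (p - 1) * x + p * x ^ (p - 1) * (y - x) := by
    field_simp
  rw [hxp]
  linarith

lemma abs_rpow_sub_rpow_le {p x y : ℝ} (hp : 1 ≤ p) (hx : 0 ≤ x) (hy : 0 ≤ y) :
    |x ^ p - y ^ p| ≤ p * max x y ^ (p - 1) * |x - y| := by
  wlog hyx : y ≤ x generalizing x y
  · simpa only [abs_sub_comm, max_comm] using this hy hx (le_of_not_ge hyx)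
  rw [max_eq_left hyx, abs_of_nonneg (sub_nonneg.2 hyx),
    abs_of_nonneg (sub_nonneg.2 (rpow_le_rpow hy hyx (by linarith)))]
  exact rpow_sub_rpow_le_mul_rpow_mul_sub hp hy hyx

lemma add_rpow_le_two_rpow_mul_rpow_add_rpow {p s t : ℝ} (hs : 0 ≤ s) (ht : 0 ≤ t)
    (hp : 0 ≤ p) :
    (s + t) ^ p ≤ 2 ^ p * (s ^ p + t ^ p) := calc
  (s + t) ^ p ≤ (2 * max s t) ^ p := by
    gcongr
    rw [two_mul]
    exact add_le_add (le_max_left s t) (le_max_right s t)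
  _ = 2 ^ p * max (s ^ p) (t ^ p) := by
    rw [mul_rpow zero_le_two (le_max_of_le_left hs), rpow_max hs ht hp]
  _ ≤ 2 ^ p * (s ^ p + t ^ p) := by
    gcongr
    exact max_le_add_of_nonneg (by positivity) (by positivity)

end Real

open Real in
/-- The elementary inequality `||a|^p − |b|^p| ≤ p 2^p (|a−b| |b|^{p−1} + |a−b|^p)`. -/
theorem statement6 (p : ℝ) (hp : 1 ≤ p) (a b : ℝ) :
    |(|a| ^ p - |b| ^ p)| ≤ p * 2 ^ p * (|a - b| * |b| ^ (p - 1) + |a - b| ^ p) := by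
  set d := |a - b|
  have hmax : max |a| |b| ≤ |b| + d :=
    max_le (by linarith [abs_sub_abs_le_abs_sub a b]) (le_add_of_nonneg_right (abs_nonneg _))
  have hdp : d ^ (p - 1) * d = d ^ p := by
    rw [← rpow_add_one' (abs_nonneg _) (by linarith), sub_add_cancel]
  calc |(|a| ^ p - |b| ^ p)| ≤ p * max |a| |b| ^ (p - 1) * |(|a| - |b|)| :=
        abs_rpow_sub_rpow_le hp (abs_nonneg a) (abs_nonneg b)
    _ ≤ p * (|b| + d) ^ (p - 1) * d := by
        gcongr
        exact abs_abs_sub_abs_le_abs_sub a b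
    _ ≤ p * (2 ^ (p - 1) * (|b| ^ (p - 1) + d ^ (p - 1))) * d := by
        gcongr
        exact add_rpow_le_two_rpow_mul_rpow_add_rpow (abs_nonneg _) (abs_nonneg _) (by linarith)
    _ = p * 2 ^ (p - 1) * (d * |b| ^ (p - 1) + d ^ p) := by rw [← hdp]; ring
    _ ≤ p * 2 ^ p * (d * |b| ^ (p - 1) + d ^ p) := by
        gcongr <;> linarith

end
end

section
/- Let p ≥ 1 and κ > p/2 + 1. Then lim_{u → 0+} u^{κ−p/2−1} ∫_{u log(1/u)}^{1/2} (t(1−t))^{p/2−κ} dt = 0. -/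
open MeasureTheory ProbabilityTheory Filter Set Topology

noncomputable section

variable {Ω : Type*} [MeasurableSpace Ω]

/-! On `(0, 1/2]` the factor `(1 - t)^r` is at most `(1/2)^r`, so the integral is dominated by
`(1/2)^r ∫_a^∞ t^r dt = (1/2)^r a^(r+1) / (-(r+1))` with `a = u log(1/u)`. Multiplied by
`u^(-(r+1))` this is a constant times `log(1/u)^(r+1)`, which tends to `0` because `r + 1 < 0`. -/

lemma rpow_mul_one_sub_le {r t : ℝ} (hr : r ≤ 0) (ht0 : 0 < t) (ht : t ≤ 1/2) :
    (t * (1 - t)) ^ r ≤ (1/2) ^ r * t ^ r := by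
  rw [Real.mul_rpow ht0.le (by linarith), mul_comm]
  exact mul_le_mul_of_nonneg_right
    (Real.rpow_le_rpow_of_nonpos (by norm_num) (by linarith) hr) (Real.rpow_nonneg ht0.le r)

lemma setIntegral_Ioc_rpow_le {r a : ℝ} (hr : r < -1) (ha : 0 < a) (b : ℝ) :
    ∫ t in Ioc a b, t ^ r ≤ -a ^ (r + 1) / (r + 1) := by
  rw [← integral_Ioi_rpow_of_lt hr ha]
  refine setIntegral_mono_set (integrableOn_Ioi_rpow_of_lt hr ha) ?_
    (Eventually.of_forall fun t ht => Ioc_subset_Ioi_self ht)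
  exact ae_restrict_of_forall_mem measurableSet_Ioi fun t ht =>
    Real.rpow_nonneg (ha.trans ht).le r

lemma setIntegral_Ioc_rpow_mul_one_sub_le {r a : ℝ} (hr : r < -1) (ha : 0 < a) :
    ∫ t in Ioc a (1/2), (t * (1 - t)) ^ r ≤ (1/2) ^ r * (-a ^ (r + 1) / (r + 1)) := by
  have hpos : ∀ t ∈ Ioc a (1/2), 0 < t := fun t ht => ha.trans ht.1
  calc ∫ t in Ioc a (1/2), (t * (1 - t)) ^ r
      ≤ ∫ t in Ioc a (1/2), (1/2) ^ r * t ^ r := by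
        refine integral_mono_of_nonneg ?_ ?_ ?_
        · exact ae_restrict_of_forall_mem measurableSet_Ioc fun t ht =>
            Real.rpow_nonneg (mul_nonneg (hpos t ht).le (by linarith [ht.2])) r
        · exact ((integrableOn_Ioi_rpow_of_lt hr ha).mono_set Ioc_subset_Ioi_self).const_mul _
        · exact ae_restrict_of_forall_mem measurableSet_Ioc fun t ht =>
            rpow_mul_one_sub_le (by linarith) (hpos t ht) ht.2
    _ = (1/2) ^ r * ∫ t in Ioc a (1/2), t ^ r := integral_const_mul _ _
    _ ≤ (1/2) ^ r * (-a ^ (r + 1) / (r + 1)) := by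
        gcongr
        exact setIntegral_Ioc_rpow_le hr ha _

theorem tendsto_rpow_mul_setIntegral_rpow_mul_one_sub {r : ℝ} (hr : r < -1) {L : ℝ → ℝ}
    (hL : Tendsto L (𝓝[>] 0) atTop) :
    Tendsto (fun u => u ^ (-(r + 1)) * ∫ t in Ioc (u * L u) (1/2), (t * (1 - t)) ^ r)
      (𝓝[>] 0) (𝓝 0) := by
  have hlim : Tendsto (fun u => (1/2) ^ r / (-(r + 1)) * L u ^ (r + 1)) (𝓝[>] 0) (𝓝 0) := by
    have h := (tendsto_rpow_neg_atTop (neg_pos.mpr (by linarith : r + 1 < 0))).comp hL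
    simpa only [neg_neg, mul_zero, Function.comp_def] using h.const_mul ((1/2) ^ r / (-(r + 1)))
  have hev : ∀ᶠ u in 𝓝[>] (0:ℝ), 0 < u ∧ 0 < L u :=
    eventually_mem_nhdsWithin.and (hL.eventually_gt_atTop 0)
  refine squeeze_zero' ?_ ?_ hlim
  · filter_upwards [hev] with u ⟨hu, hLu⟩
    refine mul_nonneg (Real.rpow_nonneg hu.le _) (setIntegral_nonneg measurableSet_Ioc ?_)
    intro t ht
    exact Real.rpow_nonneg (mul_nonneg ((mul_pos hu hLu).trans ht.1).le (by linarith [ht.2])) r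
  · filter_upwards [hev] with u ⟨hu, hLu⟩
    calc u ^ (-(r + 1)) * ∫ t in Ioc (u * L u) (1/2), (t * (1 - t)) ^ r
        ≤ u ^ (-(r + 1)) * ((1/2) ^ r * (-(u * L u) ^ (r + 1) / (r + 1))) := by
          gcongr
          exact setIntegral_Ioc_rpow_mul_one_sub_le hr (mul_pos hu hLu)
      _ = (1/2) ^ r / (-(r + 1)) * L u ^ (r + 1) := by
          rw [Real.mul_rpow hu.le hLu.le, Real.rpow_neg hu.le]
          have : u ^ (r + 1) ≠ 0 := (Real.rpow_pos_of_pos hu _).ne'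
          field_simp

theorem statement14_general (p κ : ℝ) (hκ : p/2 + 1 < κ) :
    Tendsto
      (fun u : ℝ => u ^ (κ - p/2 - 1) *
        ∫ t in Ioc (u * Real.log (1/u)) (1/2 : ℝ), (t * (1 - t)) ^ (p/2 - κ))
      (𝓝[>] (0:ℝ)) (𝓝 0) := by
  have hlog : Tendsto (fun u : ℝ => Real.log (1/u)) (𝓝[>] 0) atTop := by
    simpa only [one_div, Function.comp_def] using
      Real.tendsto_log_atTop.comp tendsto_inv_nhdsGT_zero
  have hexp : κ - p/2 - 1 = -(p/2 - κ + 1) := by ring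
  rw [hexp]
  exact tendsto_rpow_mul_setIntegral_rpow_mul_one_sub (by linarith) hlog

/-- `lim_{u→0+} u^{κ−p/2−1} ∫_{u log(1/u)}^{1/2} (t(1−t))^{p/2−κ} dt = 0`. -/
theorem statement14 (p κ : ℝ) (hp : 1 ≤ p) (hκ : p/2 + 1 < κ) :
    Tendsto
      (fun u : ℝ => u ^ (κ - p/2 - 1) *
        ∫ t in Ioc (u * Real.log (1/u)) (1/2 : ℝ), (t * (1 - t)) ^ (p/2 - κ))
      (𝓝[>] (0:ℝ)) (𝓝 0) :=
  statement14_general p κ hκ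

end
end
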